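/- Let V and A be finite-dimensional complex Hilbert spaces, let σ, σ' be density operators on V, and let ρ be a density operator on A ⊗ V with partial trace over A equal to σ. Then there exists a density operator ρ' on A ⊗ V with partial trace over A equal to σ' and F(ρ, ρ') = F(σ, σ'), where F denotes the fidelity. -/

import Mathlib

open scoped ComplexOrder
open Matrix

noncomputable def msqrt {n : Type*} [Fintype n] [DecidableEq n] (A : Matrix n n ℂ) :
    Matrix n n ℂ := by
  classical exact if h : A.PosSemidef then
    (h.1.eigenvectorUnitary : Matrix n n ℂ) * diagonal ((↑) ∘ (√·) ∘ h.1.eigenvalues) *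
      (star h.1.eigenvectorUnitary : Matrix n n ℂ) else 0

noncomputable def traceNorm {n : Type*} [Fintype n] [DecidableEq n] (A : Matrix n n ℂ) : ℝ :=
  (msqrt (Aᴴ * A)).trace.re

noncomputable def fidelity {n : Type*} [Fintype n] [DecidableEq n] (ρ ξ : Matrix n n ℂ) : ℝ :=
  (msqrt (msqrt ρ * ξ * msqrt ρ)).trace.re

noncomputable def buresAngle {n : Type*} [Fintype n] [DecidableEq n] (ρ ξ : Matrix n n ℂ) : ℝ :=
  Real.arccos (fidelity ρ ξ)

def IsDensity {n : Type*} [Fintype n] (A : Matrix n n ℂ) : Prop :=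
  A.PosSemidef ∧ A.trace = 1

def IsMeasurementOp {n : Type*} [Fintype n] [DecidableEq n] (P : Matrix n n ℂ) : Prop :=
  P.PosSemidef ∧ (1 - P).PosSemidef

/-- Partial trace over the first tensor factor. -/
noncomputable def partialTraceA {a v : Type*} [Fintype a] [Fintype v]
    (ρ : Matrix (a × v) (a × v) ℂ) : Matrix v v ℂ :=
  fun i j => ∑ x : a, ρ (x, i) (x, j)

/-!
Both inequalities come from the variational description of the fidelity: whenever `K Kᴴ ≤ ρ`
and `M Mᴴ ≤ ξ`, `Re tr (K Mᴴ) ≤ F(ρ, ξ)` (factor `K = √ρ C`, `M = √ξ D` and `√ξ √ρ = U S` with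
contractions `C`, `D`, `U` and `S = √(√ρ ξ √ρ)`), and the bound is attained by `K = √ρ`,
`M = T √ρ` for some `T` with `T ρ Tᴴ ≤ ξ`. Reshaping the row factor `A` into the columns turns
`K Mᴴ` into `tr_A (K Mᴴ)` without changing its trace, so `F(ρ, ρ') ≤ F(tr_A ρ, tr_A ρ')`.
Conversely, pad a factor `ρ = K Kᴴ` with zero columns, so that its reshaping `K̃` (with
`K̃ K̃ᴴ = σ`) admits an isometry `G` orthogonal to it. If `T σ Tᴴ ≤ σ'` attains `F(σ, σ')`, then
`M = T K̃ + (σ' - T σ Tᴴ)^{1/2} G` has `M Mᴴ = σ'` and `Re tr (K̃ Mᴴ) = F(σ, σ')`. Reshaping `M`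
back to `N`, the state `ρ' = N Nᴴ` has `tr_A ρ' = σ'` and `F(ρ, ρ') ≥ Re tr (K Nᴴ) = F(σ, σ')`.
-/

open scoped MatrixOrder

namespace Matrix

section Order

variable {n c : Type*} [Fintype n] [Fintype c]

lemma mul_mul_conjTranspose_le_mul_mul_conjTranspose {A B : Matrix n n ℂ} (h : A ≤ B)
    (M : Matrix c n ℂ) : M * A * Mᴴ ≤ M * B * Mᴴ := by
  rw [le_iff] at h ⊢
  simpa only [Matrix.mul_sub, Matrix.sub_mul] using h.mul_mul_conjTranspose_same M

lemma re_trace_le_re_trace {A B : Matrix n n ℂ} (h : A ≤ B) : A.trace.re ≤ B.trace.re := by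
  have h' := (Complex.le_def.mp (le_iff.mp h).trace_nonneg).1
  rw [trace_sub, Complex.sub_re, Complex.zero_re] at h'
  linarith

/-- The matrix AM–GM inequality, from `0 ≤ tr (S (A - B) (A - B)ᴴ)`. -/
lemma two_mul_re_trace_mul_mul_conjTranspose_le {S : Matrix n n ℂ} (hS : S.PosSemidef)
    (A B : Matrix n c ℂ) :
    2 * (S * A * Bᴴ).trace.re ≤ (S * A * Aᴴ).trace.re + (S * B * Bᴴ).trace.re := by
  have hnonneg : 0 ≤ (S * (A - B) * (A - B)ᴴ).trace.re := by
    rw [trace_mul_cycle]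
    simpa using (Complex.le_def.mp (hS.conjTranspose_mul_mul_same (A - B)).trace_nonneg).1
  have hcross : (S * B * Aᴴ).trace = star (S * A * Bᴴ).trace := by
    rw [← trace_conjTranspose, trace_mul_cycle]
    simp only [conjTranspose_mul, conjTranspose_conjTranspose, hS.1.eq, Matrix.mul_assoc]
    rw [trace_mul_comm B, Matrix.mul_assoc]
  simp only [conjTranspose_sub, Matrix.mul_sub, Matrix.sub_mul, trace_sub, Complex.sub_re, hcross,
    Complex.star_def, Complex.conj_re] at hnonneg
  linarith

end Order

section PseudoInverse

variable {n c : Type*} [Fintype n] [DecidableEq n] [Fintype c]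

lemma cfc_mul_cfc (A : Matrix n n ℂ) (f g : ℝ → ℝ) :
    cfc f A * cfc g A = cfc (fun x => f x * g x) A :=
  (cfc_mul f g A (finite_real_spectrum.continuousOn _) (finite_real_spectrum.continuousOn _)).symm

/-- On a Hermitian matrix, `x⁻¹` with `0⁻¹ = 0` is the Moore–Penrose pseudo-inverse. -/
noncomputable def pinv (A : Matrix n n ℂ) : Matrix n n ℂ := cfc (·⁻¹ : ℝ → ℝ) A

lemma isHermitian_pinv (A : Matrix n n ℂ) : (pinv A).IsHermitian := cfc_predicate _ A

variable {A : Matrix n n ℂ}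

lemma IsHermitian.mul_pinv_mul_self (hA : A.IsHermitian) : A * pinv A * A = A := by
  have := hA.isSelfAdjoint
  calc A * pinv A * A = cfc (fun x : ℝ => x * x⁻¹ * x) A := by
        rw [← cfc_mul_cfc, ← cfc_mul_cfc, cfc_id' ℝ A, pinv]
    _ = A := by simp_rw [mul_inv_mul_cancel, cfc_id' ℝ A]

lemma IsHermitian.mul_self_mul_pinv (hA : A.IsHermitian) : A * A * pinv A = A := by
  have := hA.isSelfAdjoint
  calc A * A * pinv A = cfc (fun x : ℝ => x * x * x⁻¹) A := by
        rw [← cfc_mul_cfc, ← cfc_mul_cfc, cfc_id' ℝ A, pinv]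
    _ = A := by simp_rw [mul_self_mul_inv, cfc_id' ℝ A]

lemma IsHermitian.pinv_mul_mul_self (hA : A.IsHermitian) : pinv A * (A * A) = A := by
  have := hA.isSelfAdjoint
  calc pinv A * (A * A) = cfc (fun x : ℝ => x⁻¹ * (x * x)) A := by
        rw [← cfc_mul_cfc, ← cfc_mul_cfc, cfc_id' ℝ A, pinv]
    _ = A := by simp_rw [← mul_assoc, inv_mul_mul_self, cfc_id' ℝ A]

lemma IsHermitian.pinv_mul_mul_self_mul_pinv_le_one (hA : A.IsHermitian) :
    pinv A * (A * A) * pinv A ≤ 1 := by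
  have := hA.isSelfAdjoint
  calc pinv A * (A * A) * pinv A = cfc (fun x : ℝ => x⁻¹ * (x * x) * x⁻¹) A := by
        rw [← cfc_mul_cfc, ← cfc_mul_cfc, ← cfc_mul_cfc, cfc_id' ℝ A, pinv]
    _ ≤ 1 := cfc_le_one _ _ fun x _ => by
        rcases eq_or_ne x 0 with rfl | hx
        · simp
        · exact (by field_simp : x⁻¹ * (x * x) * x⁻¹ = 1).le

lemma IsHermitian.pinv_sq_mul_sq_mul_pinv_sq (hA : A.IsHermitian) :
    pinv A * pinv A * (A * A) * (pinv A * pinv A) = pinv A * pinv A := by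
  have := hA.isSelfAdjoint
  calc pinv A * pinv A * (A * A) * (pinv A * pinv A)
      = cfc (fun x : ℝ => x⁻¹ * x⁻¹ * (x * x) * (x⁻¹ * x⁻¹)) A := by
        simp only [← cfc_mul_cfc, cfc_id' ℝ A, pinv]
    _ = cfc (fun x : ℝ => x⁻¹ * x⁻¹) A := cfc_congr fun x _ => by
        rcases eq_or_ne x 0 with rfl | hx
        · simp
        · field_simp
    _ = pinv A * pinv A := (cfc_mul_cfc _ _ _).symm

lemma IsHermitian.mul_pinv_mul_of_mul_conjTranspose_le (hA : A.IsHermitian) {X : Matrix n c ℂ}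
    (hX : X * Xᴴ ≤ A * A) : A * pinv A * X = X := by
  set E := 1 - A * pinv A
  have hEA : E * A = 0 := by rw [Matrix.sub_mul, Matrix.one_mul, hA.mul_pinv_mul_self, sub_self]
  have hle : (E * X) * (E * X)ᴴ ≤ 0 :=
    calc (E * X) * (E * X)ᴴ = E * (X * Xᴴ) * Eᴴ := by
          simp only [conjTranspose_mul, Matrix.mul_assoc]
      _ ≤ E * (A * A) * Eᴴ := mul_mul_conjTranspose_le_mul_mul_conjTranspose hX E
      _ = 0 := by rw [← Matrix.mul_assoc, hEA, Matrix.zero_mul, Matrix.zero_mul]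
  have hEX : E * X = 0 := self_mul_conjTranspose_eq_zero.mp
    (le_antisymm hle (posSemidef_self_mul_conjTranspose _).nonneg)
  rwa [Matrix.sub_mul, Matrix.one_mul, sub_eq_zero, eq_comm] at hEX

/-- Douglas' factorization lemma. -/
lemma IsHermitian.exists_eq_mul_of_mul_conjTranspose_le (hA : A.IsHermitian)
    {X : Matrix n c ℂ} (hX : X * Xᴴ ≤ A * A) : ∃ C : Matrix n c ℂ, X = A * C ∧ C * Cᴴ ≤ 1 := by
  refine ⟨pinv A * X, by rw [← Matrix.mul_assoc, hA.mul_pinv_mul_of_mul_conjTranspose_le hX], ?_⟩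
  calc pinv A * X * (pinv A * X)ᴴ = pinv A * (X * Xᴴ) * (pinv A)ᴴ := by
        simp only [conjTranspose_mul, Matrix.mul_assoc]
    _ ≤ pinv A * (A * A) * (pinv A)ᴴ := mul_mul_conjTranspose_le_mul_mul_conjTranspose hX _
    _ ≤ 1 := by rw [(isHermitian_pinv A).eq]; exact hA.pinv_mul_mul_self_mul_pinv_le_one

lemma IsHermitian.exists_polar (hA : A.IsHermitian) {X : Matrix n n ℂ} (hX : Xᴴ * X = A * A) :
    ∃ U : Matrix n n ℂ, X = U * A ∧ Uᴴ * X = A ∧ Uᴴ * U ≤ 1 ∧ U * Uᴴ ≤ 1 := by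
  have hpinv := (isHermitian_pinv A).eq
  refine ⟨X * pinv A, ?_, ?_, ?_, ?_⟩
  · have h := congrArg (·ᴴ)
      (hA.mul_pinv_mul_of_mul_conjTranspose_le (X := Xᴴ) (by rw [conjTranspose_conjTranspose, hX]))
    simpa only [conjTranspose_mul, conjTranspose_conjTranspose, hA.eq, hpinv,
      Matrix.mul_assoc] using h.symm
  · rw [conjTranspose_mul, hpinv, Matrix.mul_assoc, hX, hA.pinv_mul_mul_self]
  · rw [conjTranspose_mul, hpinv, ← Matrix.mul_assoc, Matrix.mul_assoc (pinv A), hX]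
    exact hA.pinv_mul_mul_self_mul_pinv_le_one
  · refine IsStarProjection.le_one ⟨?_, ?_⟩
    · simp only [IsIdempotentElem, conjTranspose_mul, hpinv]
      calc X * pinv A * (pinv A * Xᴴ) * (X * pinv A * (pinv A * Xᴴ))
          = X * (pinv A * pinv A * (Xᴴ * X) * (pinv A * pinv A)) * Xᴴ := by
            simp only [Matrix.mul_assoc]
        _ = X * pinv A * (pinv A * Xᴴ) := by
            rw [hX, hA.pinv_sq_mul_sq_mul_pinv_sq]; simp only [Matrix.mul_assoc]
    · exact IsSelfAdjoint.mul_star_self _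

end PseudoInverse

end Matrix

section Sqrt

variable {n : Type*} [Fintype n] [DecidableEq n] {A : Matrix n n ℂ}

lemma msqrt_eq_sqrt (hA : A.PosSemidef) : msqrt A = CFC.sqrt A := by
  rw [CFC.sqrt_eq_real_sqrt A hA.nonneg, cfcₙ_eq_cfc, hA.1.cfc_eq, msqrt, dif_pos hA]
  rfl

lemma posSemidef_msqrt (hA : A.PosSemidef) : (msqrt A).PosSemidef := by
  rw [msqrt_eq_sqrt hA, ← nonneg_iff_posSemidef]
  exact CFC.sqrt_nonneg A

lemma msqrt_mul_msqrt (hA : A.PosSemidef) : msqrt A * msqrt A = A := by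
  rw [msqrt_eq_sqrt hA]
  exact CFC.sqrt_mul_sqrt_self A hA.nonneg

lemma msqrt_mul_conjTranspose_msqrt (hA : A.PosSemidef) : msqrt A * (msqrt A)ᴴ = A := by
  rw [(posSemidef_msqrt hA).1.eq, msqrt_mul_msqrt hA]

end Sqrt

section TraceInequalities

variable {n c : Type*} [Fintype n] [DecidableEq n] [Fintype c] {S : Matrix n n ℂ}

lemma re_trace_mul_mul_conjTranspose_le (hS : S.PosSemidef) {C : Matrix n c ℂ}
    (hC : C * Cᴴ ≤ 1) : (S * C * Cᴴ).trace.re ≤ S.trace.re := by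
  set W := msqrt S
  have hW : Wᴴ = W := (posSemidef_msqrt hS).1.eq
  have h := re_trace_le_re_trace (mul_mul_conjTranspose_le_mul_mul_conjTranspose hC W)
  rwa [hW, Matrix.mul_one, msqrt_mul_msqrt hS, trace_mul_cycle, ← Matrix.mul_assoc,
    msqrt_mul_msqrt hS] at h

lemma re_trace_mul_mul_conjTranspose_le_of_contraction (hS : S.PosSemidef) {A B : Matrix n c ℂ}
    (hA : A * Aᴴ ≤ 1) (hB : B * Bᴴ ≤ 1) : (S * A * Bᴴ).trace.re ≤ S.trace.re := by
  linarith [two_mul_re_trace_mul_mul_conjTranspose_le hS A B,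
    re_trace_mul_mul_conjTranspose_le hS hA, re_trace_mul_mul_conjTranspose_le hS hB]

end TraceInequalities

section Fidelity

variable {n c : Type*} [Fintype n] [DecidableEq n] [Fintype c] {ρ ξ : Matrix n n ℂ}

lemma posSemidef_msqrt_mul_mul_msqrt (hρ : ρ.PosSemidef) (hξ : ξ.PosSemidef) :
    (msqrt ρ * ξ * msqrt ρ).PosSemidef := by
  simpa only [(posSemidef_msqrt hρ).1.eq] using hξ.mul_mul_conjTranspose_same (msqrt ρ)

/-- Polar decomposition of `√ξ √ρ`; its modulus `√(√ρ ξ √ρ)` has trace `fidelity ρ ξ`. -/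
lemma exists_polar_msqrt_mul_msqrt (hρ : ρ.PosSemidef) (hξ : ξ.PosSemidef) :
    ∃ U : Matrix n n ℂ, msqrt ξ * msqrt ρ = U * msqrt (msqrt ρ * ξ * msqrt ρ) ∧
      Uᴴ * (msqrt ξ * msqrt ρ) = msqrt (msqrt ρ * ξ * msqrt ρ) ∧ Uᴴ * U ≤ 1 ∧ U * Uᴴ ≤ 1 := by
  have hmid := posSemidef_msqrt_mul_mul_msqrt hρ hξ
  refine (posSemidef_msqrt hmid).1.exists_polar ?_
  rw [msqrt_mul_msqrt hmid, conjTranspose_mul, (posSemidef_msqrt hρ).1.eq,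
    (posSemidef_msqrt hξ).1.eq, Matrix.mul_assoc, ← Matrix.mul_assoc (msqrt ξ),
    msqrt_mul_msqrt hξ, Matrix.mul_assoc]

theorem re_trace_mul_conjTranspose_le_fidelity (hρ : ρ.PosSemidef) (hξ : ξ.PosSemidef)
    {K M : Matrix n c ℂ} (hK : K * Kᴴ ≤ ρ) (hM : M * Mᴴ ≤ ξ) :
    (K * Mᴴ).trace.re ≤ fidelity ρ ξ := by
  obtain ⟨U, hU, -, hUU, -⟩ := exists_polar_msqrt_mul_msqrt hρ hξ
  have hS := posSemidef_msqrt (posSemidef_msqrt_mul_mul_msqrt hρ hξ)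
  set S := msqrt (msqrt ρ * ξ * msqrt ρ)
  obtain ⟨CK, rfl, hCK⟩ := (posSemidef_msqrt hρ).1.exists_eq_mul_of_mul_conjTranspose_le
    (by rwa [msqrt_mul_msqrt hρ])
  obtain ⟨CM, rfl, hCM⟩ := (posSemidef_msqrt hξ).1.exists_eq_mul_of_mul_conjTranspose_le
    (by rwa [msqrt_mul_msqrt hξ])
  have htrace : (msqrt ρ * CK * (msqrt ξ * CM)ᴴ).trace = (S * CK * (Uᴴ * CM)ᴴ).trace := by
    simp only [conjTranspose_mul, conjTranspose_conjTranspose, (posSemidef_msqrt hξ).1.eq]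
    rw [trace_mul_cycle, Matrix.mul_assoc, Matrix.mul_assoc, ← Matrix.mul_assoc (msqrt ξ), hU]
    conv_rhs => rw [trace_mul_comm]
    simp only [Matrix.mul_assoc]
  have hUCM : Uᴴ * CM * (Uᴴ * CM)ᴴ ≤ 1 :=
    calc Uᴴ * CM * (Uᴴ * CM)ᴴ = Uᴴ * (CM * CMᴴ) * Uᴴᴴ := by
          simp only [conjTranspose_mul, Matrix.mul_assoc]
      _ ≤ Uᴴ * 1 * Uᴴᴴ := mul_mul_conjTranspose_le_mul_mul_conjTranspose hCM _
      _ ≤ 1 := by rwa [Matrix.mul_one, conjTranspose_conjTranspose]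
  rw [htrace]
  exact re_trace_mul_mul_conjTranspose_le_of_contraction hS hCK hUCM

theorem exists_re_trace_mul_conjTranspose_eq_fidelity (hρ : ρ.PosSemidef) (hξ : ξ.PosSemidef) :
    ∃ T : Matrix n n ℂ, T * ρ * Tᴴ ≤ ξ ∧ (ρ * Tᴴ).trace.re = fidelity ρ ξ := by
  obtain ⟨U, -, hUX, -, hUU⟩ := exists_polar_msqrt_mul_msqrt hρ hξ
  have hQ := (posSemidef_msqrt hρ).1
  have hR := (posSemidef_msqrt hξ).1
  have hQQ := msqrt_mul_msqrt hρ
  have hpinv := (isHermitian_pinv (msqrt ρ)).eq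
  unfold fidelity
  set Q := msqrt ρ
  set R := msqrt ξ
  refine ⟨R * U * pinv Q, ?_, ?_⟩
  · calc R * U * pinv Q * ρ * (R * U * pinv Q)ᴴ
        = R * U * (pinv Q * (Q * Q) * (pinv Q)ᴴ) * (R * U)ᴴ := by
          rw [hQQ]; simp only [conjTranspose_mul, Matrix.mul_assoc]
      _ ≤ R * U * 1 * (R * U)ᴴ := mul_mul_conjTranspose_le_mul_mul_conjTranspose
          (by rw [hpinv]; exact hQ.pinv_mul_mul_self_mul_pinv_le_one) _
      _ = R * (U * Uᴴ) * Rᴴ := by simp only [conjTranspose_mul, Matrix.mul_one, Matrix.mul_assoc]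
      _ ≤ R * 1 * Rᴴ := mul_mul_conjTranspose_le_mul_mul_conjTranspose hUU _
      _ = ξ := by rw [Matrix.mul_one, msqrt_mul_conjTranspose_msqrt hξ]
  · rw [← hUX, conjTranspose_mul, conjTranspose_mul, hpinv, hR.eq, ← hQQ, ← Matrix.mul_assoc,
      ← Matrix.mul_assoc, hQ.mul_self_mul_pinv, trace_mul_cycle, Matrix.mul_assoc,
      ← Matrix.mul_assoc, trace_mul_comm]

end Fidelity

section PartialTrace

variable {a v c : Type*}

def reshape : Matrix (a × v) c ℂ ≃ Matrix v (a × c) ℂ where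
  toFun X i p := X (p.1, i) p.2
  invFun Y p k := Y p.2 (p.1, k)
  left_inv _ := rfl
  right_inv _ := rfl

@[simp]
lemma reshape_apply (X : Matrix (a × v) c ℂ) (i : v) (p : a × c) :
    reshape X i p = X (p.1, i) p.2 :=
  rfl

variable [Fintype a] [Fintype v] [Fintype c]

lemma reshape_mul_conjTranspose_reshape (X Y : Matrix (a × v) c ℂ) :
    reshape X * (reshape Y)ᴴ = partialTraceA (X * Yᴴ) := by
  ext i j
  simp only [mul_apply, conjTranspose_apply, partialTraceA, Fintype.sum_prod_type]
  rfl

lemma trace_partialTraceA (X : Matrix (a × v) (a × v) ℂ) : (partialTraceA X).trace = X.trace := by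
  simp only [partialTraceA, trace, diag, Fintype.sum_prod_type]
  exact Finset.sum_comm

lemma partialTraceA_sub (X Y : Matrix (a × v) (a × v) ℂ) :
    partialTraceA (X - Y) = partialTraceA X - partialTraceA Y := by
  ext i j
  simp only [partialTraceA, Matrix.sub_apply, Finset.sum_sub_distrib]

variable [DecidableEq a] [DecidableEq v]

lemma posSemidef_partialTraceA {X : Matrix (a × v) (a × v) ℂ} (hX : X.PosSemidef) :
    (partialTraceA X).PosSemidef := by
  rw [← msqrt_mul_conjTranspose_msqrt hX, ← reshape_mul_conjTranspose_reshape]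
  exact posSemidef_self_mul_conjTranspose _

lemma partialTraceA_mono {X Y : Matrix (a × v) (a × v) ℂ} (h : X ≤ Y) :
    partialTraceA X ≤ partialTraceA Y := by
  rw [le_iff, ← partialTraceA_sub]
  exact posSemidef_partialTraceA (le_iff.mp h)

theorem fidelity_le_fidelity_partialTraceA {ρ ξ : Matrix (a × v) (a × v) ℂ}
    (hρ : ρ.PosSemidef) (hξ : ξ.PosSemidef) :
    fidelity ρ ξ ≤ fidelity (partialTraceA ρ) (partialTraceA ξ) := by
  obtain ⟨T, hT, hTρ⟩ := exists_re_trace_mul_conjTranspose_eq_fidelity hρ hξ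
  set K := msqrt ρ
  have hKK : K * Kᴴ = ρ := msqrt_mul_conjTranspose_msqrt hρ
  calc fidelity ρ ξ = (reshape K * (reshape (T * K))ᴴ).trace.re := by
        rw [← hTρ, reshape_mul_conjTranspose_reshape, trace_partialTraceA, conjTranspose_mul,
          ← Matrix.mul_assoc, hKK]
    _ ≤ _ := re_trace_mul_conjTranspose_le_fidelity
        (posSemidef_partialTraceA hρ) (posSemidef_partialTraceA hξ)
        (by rw [reshape_mul_conjTranspose_reshape, hKK])
        (by rw [reshape_mul_conjTranspose_reshape, conjTranspose_mul, ← Matrix.mul_assoc,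
          Matrix.mul_assoc T, hKK]; exact partialTraceA_mono hT)

end PartialTrace

section Extension

variable {n c : Type*} [Fintype n] [DecidableEq n] [Fintype c]

/-- The defect `ξ - T K Kᴴ Tᴴ` is filled in along an isometry orthogonal to `K`. -/
lemma exists_mul_conjTranspose_eq_of_le {K G : Matrix n c ℂ} (hG : G * Gᴴ = 1)
    (hKG : K * Gᴴ = 0) {T ξ : Matrix n n ℂ} (hT : T * (K * Kᴴ) * Tᴴ ≤ ξ) :
    ∃ M : Matrix n c ℂ, M * Mᴴ = ξ ∧ K * Mᴴ = K * Kᴴ * Tᴴ := by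
  have hD := le_iff.mp hT
  set D := msqrt (ξ - T * (K * Kᴴ) * Tᴴ)
  have hDD : D * Dᴴ = ξ - T * (K * Kᴴ) * Tᴴ := msqrt_mul_conjTranspose_msqrt hD
  have hGK : G * Kᴴ = 0 := by rw [← conjTranspose_conjTranspose G, ← conjTranspose_mul, hKG,
    conjTranspose_zero]
  refine ⟨T * K + D * G, ?_, ?_⟩
  · calc (T * K + D * G) * (T * K + D * G)ᴴ
        = T * (K * Kᴴ) * Tᴴ + T * (K * Gᴴ) * Dᴴ + D * (G * Kᴴ) * Tᴴ + D * (G * Gᴴ) * Dᴴ := by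
          simp only [conjTranspose_add, conjTranspose_mul, Matrix.add_mul, Matrix.mul_add,
            Matrix.mul_assoc]
          abel
      _ = ξ := by rw [hKG, hGK, hG, Matrix.mul_one, hDD]; simp
  · rw [conjTranspose_add, conjTranspose_mul, conjTranspose_mul, Matrix.mul_add,
      ← Matrix.mul_assoc K Gᴴ, hKG, Matrix.zero_mul, add_zero, Matrix.mul_assoc]

end Extension

section Padding

variable {a v c : Type*} [Fintype a] [Fintype v] [Fintype c] [DecidableEq v]

lemma exists_isometry_orthogonal_reshape_fromCols (a₀ : a) (B : Matrix (a × v) c ℂ) :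
    ∃ G : Matrix v (a × (c ⊕ v)) ℂ,
      G * Gᴴ = 1 ∧ reshape (fromCols B (0 : Matrix (a × v) v ℂ)) * Gᴴ = 0 := by
  classical
  refine ⟨of fun i p => if p = (a₀, Sum.inr i) then 1 else 0, ?_, ?_⟩
  · ext i j
    simp only [mul_apply, conjTranspose_apply, of_apply, apply_ite star, star_one, star_zero,
      mul_ite, mul_one, mul_zero, Finset.sum_ite_eq', Finset.mem_univ, if_true, one_apply,
      Prod.mk.injEq, Sum.inr.injEq, true_and, @eq_comm _ j i]
  · ext i j
    simp [mul_apply]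

end Padding

/-- Preservation of subsystem fidelity: any extension `ρ` of `σ` admits an extension
`ρ'` of `σ'` with the same fidelity. -/
theorem preservation_of_subsystem_fidelity {a v : Type*}
    [Fintype a] [DecidableEq a] [Fintype v] [DecidableEq v]
    (σ σ' : Matrix v v ℂ) (hσ : IsDensity σ) (hσ' : IsDensity σ')
    (ρ : Matrix (a × v) (a × v) ℂ) (hρ : IsDensity ρ)
    (hpt : partialTraceA ρ = σ) :
    ∃ ρ' : Matrix (a × v) (a × v) ℂ, IsDensity ρ' ∧ partialTraceA ρ' = σ' ∧
      fidelity ρ ρ' = fidelity σ σ' := by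
  obtain ⟨a₀⟩ : Nonempty a := not_isEmpty_iff.mp fun _ => by
    simpa [trace_eq_zero_of_isEmpty] using hρ.2
  set K := fromCols (msqrt ρ) (0 : Matrix (a × v) v ℂ)
  have hKK : K * Kᴴ = ρ := by
    rw [conjTranspose_fromCols_eq_fromRows_conjTranspose, fromCols_mul_fromRows, Matrix.zero_mul,
      add_zero, msqrt_mul_conjTranspose_msqrt hρ.1]
  have hσK : reshape K * (reshape K)ᴴ = σ := by
    rw [reshape_mul_conjTranspose_reshape, hKK, hpt]
  obtain ⟨G, hG, hKG⟩ := exists_isometry_orthogonal_reshape_fromCols a₀ (msqrt ρ)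
  obtain ⟨T, hT, hTσ⟩ := exists_re_trace_mul_conjTranspose_eq_fidelity hσ.1 hσ'.1
  obtain ⟨M, hMM, hKM⟩ := exists_mul_conjTranspose_eq_of_le (T := T) (ξ := σ') hG hKG (by rwa [hσK])
  set N := reshape.symm M
  have hN : partialTraceA (N * Nᴴ) = σ' := by
    rw [← reshape_mul_conjTranspose_reshape, Equiv.apply_symm_apply, hMM]
  have hNpsd : (N * Nᴴ).PosSemidef := posSemidef_self_mul_conjTranspose N
  refine ⟨N * Nᴴ, ⟨hNpsd, by rw [← trace_partialTraceA, hN, hσ'.2]⟩, hN, le_antisymm ?_ ?_⟩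
  · simpa only [hpt, hN] using fidelity_le_fidelity_partialTraceA hρ.1 hNpsd
  · calc fidelity σ σ' = (reshape K * (reshape N)ᴴ).trace.re := by
          rw [Equiv.apply_symm_apply, hKM, hσK, hTσ]
      _ = (K * Nᴴ).trace.re := by rw [reshape_mul_conjTranspose_reshape, trace_partialTraceA]
      _ ≤ fidelity ρ (N * Nᴴ) := re_trace_mul_conjTranspose_le_fidelity hρ.1 hNpsd hKK.le le_rfl
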